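/- arXiv:0708.2495 — 3 statements merged into one kernel-verified Lean document; each statement's English description precedes it below -/
import Mathlib

section
/- Let X ⊆ ℙⁿ be an irreducible complete intersection of a quadric and a cubic, and suppose x ∈ X is a point with multiplicity exactly 2 (a double point) and X is not a cone with vertex x. Then a general line through x contained in the tangent cone directions meets X in at most one further point, and the projection π_x : X ⇢ ℙ^{n−1} from x is a birational map onto its image. -/
open scoped Classical

/-- The restriction of a multivariate polynomial `f` to the parametrized line `t ↦ x + t • v`,
as a polynomial in `t`. -/
noncomputable def linePoly {k : Type} [CommRing k] {n : ℕ}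
    (f : MvPolynomial (Fin n) k) (x v : Fin n → k) : Polynomial k :=
  MvPolynomial.aeval (fun i => Polynomial.C (x i) + Polynomial.X * Polynomial.C (v i)) f

/-- The order of vanishing of `f` at `x` along the direction `v` (⊤ if the whole line lies in
the zero locus of `f`). -/
noncomputable def lineOrder {k : Type} [Field k] {n : ℕ}
    (f : MvPolynomial (Fin n) k) (x v : Fin n → k) : ℕ∞ :=
  if linePoly f x v = 0 then ⊤ else (Polynomial.rootMultiplicity 0 (linePoly f x v) : ℕ∞)

/-!
Restrict the equations to the line `t ↦ x + t • v`. For a direction `v` in the tangent cone of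
`X` at `x`, the cubic restricts to `c(x + t v) = t² (γ(v) + δ(v) t)`, where `γ` is a quadratic
form in `v` that is not identically zero because `x` has multiplicity exactly two. Whenever
`γ(v) ≠ 0` the line therefore meets `X` in at most one point besides `x`.

On the line through `x` and a point `y` of `X` the quadric restricts to
`q(s x + t y) = s t · B(x, y)`, where `B(x, ·)` is the linear form cutting out the tangent
hyperplane of the quadric at `x`. This form does not lie in the ideal `(q, c)`, whose elements
have no terms of degree below two, and whenever `B(x, y) ≠ 0` the only points of `X` on the line
are `x` and `y`, so the projection from `x` is birational onto its image.
-/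

open MvPolynomial

section
variable {R : Type} [CommRing R] {n : ℕ}

lemma eval_linePoly (f : MvPolynomial (Fin n) R) (x v : Fin n → R) (t : R) :
    (linePoly f x v).eval t = eval (x + t • v) f := by
  induction f using MvPolynomial.induction_on with
  | C a => simp [linePoly]
  | add p q hp hq => simp_all [linePoly]
  | mul_X p i hp => simp_all [linePoly]; ring

lemma linePoly_map {S : Type} [CommRing S] (φ : R →+* S) (f : MvPolynomial (Fin n) R)
    (x v : Fin n → R) : (linePoly f x v).map φ = linePoly (f.map φ) (φ ∘ x) (φ ∘ v) := by
  induction f using MvPolynomial.induction_on with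
  | C a => simp [linePoly]
  | add p q hp hq => simp_all [linePoly]
  | mul_X p i hp => simp_all [linePoly]

lemma coeff_zero_linePoly (f : MvPolynomial (Fin n) R) (x v : Fin n → R) :
    (linePoly f x v).coeff 0 = eval x f := by
  simp [Polynomial.coeff_zero_eq_eval_zero, eval_linePoly]

lemma coeff_one_linePoly (f : MvPolynomial (Fin n) R) (x v : Fin n → R) :
    (linePoly f x v).coeff 1 = ∑ i, v i * eval x (pderiv i f) := by
  induction f using MvPolynomial.induction_on with
  | C a => simp [linePoly]
  | add p q hp hq => simp_all [linePoly, mul_add, Finset.sum_add_distrib]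
  | mul_X p i hp =>
    have h : linePoly (p * X i) x v = linePoly p x v * Polynomial.C (x i)
        + linePoly p x v * Polynomial.C (v i) * Polynomial.X := by
      simp only [linePoly, map_mul, aeval_X]; ring
    simp only [h, Polynomial.coeff_add, Polynomial.coeff_mul_C, Polynomial.coeff_mul_X, hp,
      coeff_zero_linePoly, Derivation.leibniz, pderiv_X, smul_eq_mul, map_add, map_mul, eval_X,
      Pi.single_apply, mul_add, Finset.sum_add_distrib, Finset.sum_mul]
    simp [mul_comm, mul_left_comm, add_comm]

lemma Polynomial.natDegree_C_add_X_mul_C_pow_le (a b : R) (e : ℕ) :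
    ((C a + X * C b) ^ e).natDegree ≤ e := by
  have h := natDegree_pow_le_of_le e (by compute_degree : (C a + X * C b).natDegree ≤ 1)
  rwa [mul_one] at h

lemma Polynomial.coeff_C_add_X_mul_C_pow (a b : R) (e : ℕ) :
    ((C a + X * C b) ^ e).coeff e = b ^ e := by
  have h := coeff_pow_of_natDegree_le (p := C a + X * C b) (m := e) (n := 1) (by compute_degree)
  rw [mul_one] at h
  rw [h]
  simp

lemma linePoly_monomial_single_add (a : Fin n) (b : ℕ) (m : Fin n →₀ ℕ) (r : R)
    (x v : Fin n → R) :
    linePoly (monomial (Finsupp.single a b + m) r) x v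
      = (Polynomial.C (x a) + Polynomial.X * Polynomial.C (v a)) ^ b
        * linePoly (monomial m r) x v := by
  simp [linePoly, monomial_single_add]

lemma natDegree_linePoly_monomial_le (m : Fin n →₀ ℕ) (r : R) (x v : Fin n → R) :
    (linePoly (monomial m r) x v).natDegree ≤ m.degree := by
  induction m using Finsupp.induction with
  | zero => simp [linePoly]
  | single_add a b m _ _ ih =>
    rw [linePoly_monomial_single_add, map_add, Finsupp.degree_single]
    exact Polynomial.natDegree_mul_le.trans
      (add_le_add (Polynomial.natDegree_C_add_X_mul_C_pow_le _ _ b) ih)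

lemma coeff_degree_linePoly_monomial (m : Fin n →₀ ℕ) (r : R) (x v : Fin n → R) :
    (linePoly (monomial m r) x v).coeff m.degree = eval v (monomial m r) := by
  induction m using Finsupp.induction with
  | zero => simp [linePoly]
  | single_add a b m _ _ ih =>
    rw [linePoly_monomial_single_add, map_add, Finsupp.degree_single,
      Polynomial.coeff_mul_add_eq_of_natDegree_le (Polynomial.natDegree_C_add_X_mul_C_pow_le _ _ b)
        (natDegree_linePoly_monomial_le m r x v), Polynomial.coeff_C_add_X_mul_C_pow, ih]
    simp [monomial_single_add]

lemma MvPolynomial.IsHomogeneous.eval_smul {f : MvPolynomial (Fin n) R} {d : ℕ}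
    (hf : f.IsHomogeneous d) (t : R) (w : Fin n → R) :
    eval (t • w) f = t ^ d * eval w f := by
  induction hf using IsWeightedHomogeneous.induction_on with
  | zero => simp
  | add p q _ _ hp hq => simp [hp, hq, mul_add]
  | monomial m r hr =>
    obtain rfl : m.degree = d := by rw [Finsupp.degree_eq_weight_one]; exact hr
    simp [eval_monomial, mul_pow, Finsupp.prod_mul, Finsupp.prod_pow, Finset.prod_pow_eq_pow_sum,
      Finsupp.degree_eq_sum]
    ring

lemma MvPolynomial.IsHomogeneous.natDegree_linePoly_le {f : MvPolynomial (Fin n) R} {d : ℕ}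
    (hf : f.IsHomogeneous d) (x v : Fin n → R) :
    (linePoly f x v).natDegree ≤ d := by
  induction hf using IsWeightedHomogeneous.induction_on with
  | zero => simp [linePoly]
  | add p q _ _ hp hq =>
    rw [linePoly, map_add]
    exact (Polynomial.natDegree_add_le _ _).trans (max_le hp hq)
  | monomial m r hr =>
    obtain rfl : m.degree = d := by rw [Finsupp.degree_eq_weight_one]; exact hr
    exact natDegree_linePoly_monomial_le m r x v

lemma MvPolynomial.IsHomogeneous.coeff_linePoly {f : MvPolynomial (Fin n) R} {d : ℕ}
    (hf : f.IsHomogeneous d) (x v : Fin n → R) :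
    (linePoly f x v).coeff d = eval v f := by
  induction hf using IsWeightedHomogeneous.induction_on with
  | zero => simp [linePoly]
  | add p q _ _ hp hq => simp_all [linePoly]
  | monomial m r hr =>
    obtain rfl : m.degree = d := by rw [Finsupp.degree_eq_weight_one]; exact hr
    exact coeff_degree_linePoly_monomial m r x v

/-- The coefficient of `t ^ j` in `f (x + t • v)` as a polynomial in `v`, obtained by taking the
generic point `X` as direction. -/
noncomputable def linePolyCoeff (f : MvPolynomial (Fin n) R) (x : Fin n → R) (j : ℕ) :
    MvPolynomial (Fin n) R :=
  (linePoly (f.map C) (C ∘ x) X).coeff j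

lemma eval_linePolyCoeff (f : MvPolynomial (Fin n) R) (x v : Fin n → R) (j : ℕ) :
    eval v (linePolyCoeff f x j) = (linePoly f x v).coeff j := by
  have hC : (eval v).comp C = RingHom.id R := by ext; simp
  have hx : eval v ∘ C ∘ x = x := by funext; simp
  have hv : eval v ∘ X = v := by funext; simp
  rw [linePolyCoeff, ← Polynomial.coeff_map, linePoly_map, map_map, hC, map_id, hx, hv]

noncomputable def tangentForm (f : MvPolynomial (Fin n) R) (x : Fin n → R) :
    MvPolynomial (Fin n) R :=
  ∑ i, C (eval x (pderiv i f)) * X i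

lemma eval_tangentForm (f : MvPolynomial (Fin n) R) (x y : Fin n → R) :
    eval y (tangentForm f x) = ∑ i, y i * eval x (pderiv i f) := by
  simp [tangentForm, mul_comm]

lemma coeff_single_tangentForm (f : MvPolynomial (Fin n) R) (x : Fin n → R) (i : Fin n) :
    coeff (Finsupp.single i 1) (tangentForm f x) = eval x (pderiv i f) := by
  simp [tangentForm, coeff_sum, coeff_X, Finsupp.single_left_inj]

lemma MvPolynomial.IsHomogeneous.coeff_mul_eq_zero {g : MvPolynomial (Fin n) R} {d : ℕ}
    (hg : g.IsHomogeneous d) (a : MvPolynomial (Fin n) R) {m : Fin n →₀ ℕ}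
    (hm : m.degree < d) :
    coeff m (a * g) = 0 := by
  rw [coeff_mul]
  refine Finset.sum_eq_zero fun p hp => ?_
  rw [Finset.HasAntidiagonal.mem_antidiagonal] at hp
  have : p.2.degree < d := by
    have := congrArg Finsupp.degree hp
    rw [map_add] at this
    omega
  rw [hg.coeff_eq_zero this.ne, mul_zero]

lemma MvPolynomial.IsHomogeneous.eval_smul_add_smul {q : MvPolynomial (Fin n) R}
    (hq : q.IsHomogeneous 2) (x y : Fin n → R) (s t : R) :
    eval (s • x + t • y) q
      = s ^ 2 * eval x q + s * t * eval y (tangentForm q x) + t ^ 2 * eval y q := by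
  have hpderiv (i : Fin n) : eval (s • x) (pderiv i q) = s * eval x (pderiv i q) := by
    simpa using (hq.pderiv (i := i)).eval_smul s x
  rw [← eval_linePoly,
    Polynomial.eval_eq_sum_range' (Nat.lt_succ_of_le (hq.natDegree_linePoly_le _ _))]
  simp only [Finset.sum_range_succ, Finset.sum_range_zero, coeff_zero_linePoly, coeff_one_linePoly,
    hq.coeff_linePoly, hq.eval_smul, hpderiv, eval_tangentForm, mul_left_comm _ s,
    ← Finset.mul_sum]
  ring

lemma tangentForm_notMem_span_pair {f g₁ g₂ : MvPolynomial (Fin n) R} {d₁ d₂ : ℕ}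
    (h₁ : g₁.IsHomogeneous d₁) (h₂ : g₂.IsHomogeneous d₂) (hd₁ : 2 ≤ d₁)
    (hd₂ : 2 ≤ d₂) {x : Fin n → R} {i : Fin n} (hi : eval x (pderiv i f) ≠ 0) :
    tangentForm f x ∉ Ideal.span {g₁, g₂} := by
  rintro hmem
  obtain ⟨a, b, hab⟩ := Ideal.mem_span_pair.mp hmem
  have hdeg : (Finsupp.single i 1).degree = 1 := Finsupp.degree_single i 1
  apply hi
  rw [← coeff_single_tangentForm, ← hab, coeff_add, h₁.coeff_mul_eq_zero a (by omega),
    h₂.coeff_mul_eq_zero b (by omega), add_zero]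

end

section
variable {K : Type} [Field K] {n : ℕ}

lemma Polynomial.subsingleton_setOf_ne_zero_eval_eq_zero {p : Polynomial K} {m : ℕ}
    (hdeg : p.natDegree ≤ m + 1) (hlow : ∀ j < m, p.coeff j = 0) (hm : p.coeff m ≠ 0) :
    {t : K | t ≠ 0 ∧ p.eval t = 0}.Subsingleton := by
  obtain ⟨g, rfl⟩ := X_pow_dvd_iff.mpr hlow
  have hg0 : g.coeff 0 ≠ 0 := by simpa [coeff_X_pow_mul'] using hm
  have hg : g.natDegree ≤ 1 := by
    rw [natDegree_mul (pow_ne_zero _ X_ne_zero) (fun h => hg0 (by simp [h])),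
      natDegree_X_pow] at hdeg
    omega
  have root : ∀ t : K, t ≠ 0 → (X ^ m * g).eval t = 0 → g.coeff 1 * t + g.coeff 0 = 0 := by
    intro t ht hpt
    rw [eval_mul, eval_pow, eval_X, mul_eq_zero, or_iff_right (pow_ne_zero _ ht),
      eq_X_add_C_of_natDegree_le_one hg] at hpt
    simpa using hpt
  rintro s ⟨hs, hps⟩ t ⟨ht, hpt⟩
  have hs' := root s hs hps
  have ht' := root t ht hpt
  have h1 : g.coeff 1 ≠ 0 := fun h => hg0 (by simpa [h] using hs')
  exact mul_left_cancel₀ h1 (by linear_combination hs' - ht')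

lemma le_lineOrder_iff (f : MvPolynomial (Fin n) K) (x v : Fin n → K) (m : ℕ) :
    (m : ℕ∞) ≤ lineOrder f x v ↔ ∀ j < m, (linePoly f x v).coeff j = 0 := by
  unfold lineOrder
  split_ifs with h
  · simp [h]
  · rw [Nat.cast_le, Polynomial.le_rootMultiplicity_iff h, map_zero, sub_zero,
      Polynomial.X_pow_dvd_iff]

lemma two_le_lineOrder_iff {f : MvPolynomial (Fin n) K} {x : Fin n → K} (hx : eval x f = 0)
    (v : Fin n → K) : 2 ≤ lineOrder f x v ↔ ∑ i, v i * eval x (pderiv i f) = 0 := by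
  rw [show (2 : ℕ∞) = (2 : ℕ) from rfl, le_lineOrder_iff, ← coeff_one_linePoly]
  constructor
  · exact fun h => h 1 one_lt_two
  · intro h j hj
    interval_cases j
    · rwa [coeff_zero_linePoly]
    · exact h

lemma coeff_two_linePoly_ne_zero {f : MvPolynomial (Fin n) K} {x v : Fin n → K}
    (h : lineOrder f x v = 2) : (linePoly f x v).coeff 2 ≠ 0 := by
  have h2 := (le_lineOrder_iff f x v 2).mp h.ge
  have h3 : ¬ ((3 : ℕ) : ℕ∞) ≤ lineOrder f x v := by rw [h]; decide
  rw [le_lineOrder_iff] at h3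
  push Not at h3
  obtain ⟨j, hj, hne⟩ := h3
  interval_cases j
  · exact absurd (h2 0 two_pos) hne
  · exact absurd (h2 1 one_lt_two) hne
  · exact hne

lemma subsingleton_setOf_eval_add_smul_eq_zero {c : MvPolynomial (Fin n) K}
    (hc : c.IsHomogeneous 3) {x v : Fin n → K} (hc2 : 2 ≤ lineOrder c x v)
    (hγ : (linePoly c x v).coeff 2 ≠ 0) :
    {t : K | t ≠ 0 ∧ eval (x + t • v) c = 0}.Subsingleton := by
  simpa only [eval_linePoly] using Polynomial.subsingleton_setOf_ne_zero_eval_eq_zero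
    (hc.natDegree_linePoly_le x v) ((le_lineOrder_iff c x v 2).mp hc2) hγ

lemma eq_smul_or_eq_smul_of_mem_span_pair {q : MvPolynomial (Fin n) K} (hq : q.IsHomogeneous 2)
    {x y z : Fin n → K} (hxq : eval x q = 0) (hyq : eval y q = 0)
    (hxy : eval y (tangentForm q x) ≠ 0) (hz0 : z ≠ 0) (hzq : eval z q = 0)
    (hz : z ∈ Submodule.span K {x, y}) :
    (∃ a : K, a ≠ 0 ∧ z = a • y) ∨ (∃ a : K, a ≠ 0 ∧ z = a • x) := by
  obtain ⟨s, t, rfl⟩ := Submodule.mem_span_pair.mp hz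
  rw [hq.eval_smul_add_smul, hxq, hyq] at hzq
  have hst : s * t = 0 := by simpa [hxy] using hzq
  rcases mul_eq_zero.mp hst with rfl | rfl
  · exact .inl ⟨t, fun ht => hz0 (by simp [ht]), by simp⟩
  · exact .inr ⟨s, fun hs => hz0 (by simp [hs]), by simp⟩

end

theorem double_point_projection_birational_general
    (k : Type) [Field k] (n : ℕ)
    (q c : MvPolynomial (Fin (n + 1)) k)
    (hq : q.IsHomogeneous 2) (hc : c.IsHomogeneous 3)
    (x : Fin (n + 1) → k)
    (hxq : MvPolynomial.eval x q = 0)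
    (hsmq : ∃ i, MvPolynomial.eval x (MvPolynomial.pderiv i q) ≠ 0)
    (hmult2' : ∃ v : Fin (n + 1) → k,
      (∑ i, v i * MvPolynomial.eval x (MvPolynomial.pderiv i q)) = 0 ∧
        lineOrder c x v = 2) :
    (∃ D : MvPolynomial (Fin (n + 1)) k, D ≠ 0 ∧
      (∃ v, MvPolynomial.eval v D ≠ 0 ∧ 2 ≤ lineOrder q x v ∧ 2 ≤ lineOrder c x v) ∧
      ∀ v : Fin (n + 1) → k, MvPolynomial.eval v D ≠ 0 →
        2 ≤ lineOrder q x v → 2 ≤ lineOrder c x v →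
          Set.Subsingleton {t : k | t ≠ 0 ∧
            MvPolynomial.eval (x + t • v) q = 0 ∧ MvPolynomial.eval (x + t • v) c = 0}) ∧
    (∃ E : MvPolynomial (Fin (n + 1)) k, E ∉ Ideal.span {q, c} ∧
      ∀ y : Fin (n + 1) → k, y ≠ 0 →
        MvPolynomial.eval y q = 0 → MvPolynomial.eval y c = 0 →
          MvPolynomial.eval y E ≠ 0 →
            ∀ z : Fin (n + 1) → k, z ≠ 0 →
              MvPolynomial.eval z q = 0 → MvPolynomial.eval z c = 0 →
                z ∈ Submodule.span k {x, y} →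
                  (∃ a : k, a ≠ 0 ∧ z = a • y) ∨ (∃ a : k, a ≠ 0 ∧ z = a • x)) := by
  obtain ⟨v₀, hv₀q, hv₀c⟩ := hmult2'
  obtain ⟨i₀, hi₀⟩ := hsmq
  have hD₀ : eval v₀ (linePolyCoeff c x 2) ≠ 0 := by
    rw [eval_linePolyCoeff]
    exact coeff_two_linePoly_ne_zero hv₀c
  refine ⟨⟨linePolyCoeff c x 2, fun h => hD₀ (by simp [h]),
      ⟨v₀, hD₀, (two_le_lineOrder_iff hxq v₀).mpr hv₀q, hv₀c.ge⟩, ?_⟩,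
    ⟨tangentForm q x, tangentForm_notMem_span_pair hq hc le_rfl (by norm_num) hi₀, ?_⟩⟩
  · intro v hv _ hvc
    rw [eval_linePolyCoeff] at hv
    exact (subsingleton_setOf_eval_add_smul_eq_zero hc hvc hv).anti fun t ht => ⟨ht.1, ht.2.2⟩
  · intro y _ hyq _ hyE z hz0 hzq _ hz
    exact eq_smul_or_eq_smul_of_mem_span_pair hq hxq hyq hyE hz0 hzq hz

/-- Let X ⊆ ℙⁿ be an irreducible complete intersection of a quadric q and a cubic c,
and x ∈ X a double point: x is a smooth point of the quadric, and along every direction v tangent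
to the quadric at x the cubic vanishes to order ≥ 2, with order exactly 2 for some tangent
direction (multiplicity of x on X is exactly 2).  Assume X is not a cone with vertex x.  Then a
general line through x whose direction lies in the tangent cone of X at x (i.e. both q and c
vanish to order ≥ 2 along it) meets X in at most one further point, and the projection from x is
birational onto its image: for a general point y of X, the only points of X on the line through
x and y are (the classes of) x and y. -/
theorem double_point_projection_birational
    (k : Type) [Field k] [IsAlgClosed k] [CharZero k] (n : ℕ)
    (q c : MvPolynomial (Fin (n + 1)) k)
    (hq : q.IsHomogeneous 2) (hc : c.IsHomogeneous 3)
    (hprime : (Ideal.span {q, c}).IsPrime)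
    (x : Fin (n + 1) → k) (hx0 : x ≠ 0)
    (hxq : MvPolynomial.eval x q = 0) (hxc : MvPolynomial.eval x c = 0)
    (hsmq : ∃ i, MvPolynomial.eval x (MvPolynomial.pderiv i q) ≠ 0)
    (hmult2 : ∀ v : Fin (n + 1) → k,
      (∑ i, v i * MvPolynomial.eval x (MvPolynomial.pderiv i q)) = 0 →
        2 ≤ lineOrder c x v)
    (hmult2' : ∃ v : Fin (n + 1) → k,
      (∑ i, v i * MvPolynomial.eval x (MvPolynomial.pderiv i q)) = 0 ∧
        lineOrder c x v = 2)
    (hnotcone : ¬ ∀ v : Fin (n + 1) → k, v ≠ 0 →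
      MvPolynomial.eval v q = 0 → MvPolynomial.eval v c = 0 →
        ∀ s t : k, MvPolynomial.eval (s • x + t • v) q = 0 ∧
          MvPolynomial.eval (s • x + t • v) c = 0) :
    (∃ D : MvPolynomial (Fin (n + 1)) k, D ≠ 0 ∧
      (∃ v, MvPolynomial.eval v D ≠ 0 ∧ 2 ≤ lineOrder q x v ∧ 2 ≤ lineOrder c x v) ∧
      ∀ v : Fin (n + 1) → k, MvPolynomial.eval v D ≠ 0 →
        2 ≤ lineOrder q x v → 2 ≤ lineOrder c x v →
          Set.Subsingleton {t : k | t ≠ 0 ∧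
            MvPolynomial.eval (x + t • v) q = 0 ∧ MvPolynomial.eval (x + t • v) c = 0}) ∧
    (∃ E : MvPolynomial (Fin (n + 1)) k, E ∉ Ideal.span {q, c} ∧
      ∀ y : Fin (n + 1) → k, y ≠ 0 →
        MvPolynomial.eval y q = 0 → MvPolynomial.eval y c = 0 →
          MvPolynomial.eval y E ≠ 0 →
            ∀ z : Fin (n + 1) → k, z ≠ 0 →
              MvPolynomial.eval z q = 0 → MvPolynomial.eval z c = 0 →
                z ∈ Submodule.span k {x, y} →
                  (∃ a : k, a ≠ 0 ∧ z = a • y) ∨ (∃ a : k, a ≠ 0 ∧ z = a • x)) :=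
  double_point_projection_birational_general k n q c hq hc x hxq hsmq hmult2'
end

section
/- Every quadric hypersurface Q over a field k of characteristic zero that is rational over k contains a conic defined over k (a smooth plane section that is a k-rational curve), provided dim Q ≥ 2. -/
/-!
Smoothness of the quadric says exactly that the polar form of `q` is nondegenerate. A nonzero
isotropic vector `p` then lies in a hyperbolic pair `(p, p')`, and as `n + 1 ≥ 3` the orthogonal
complement of `⟨p, p'⟩` is nonzero and contains a `v` with `Q v ≠ 0`. The plane `⟨p, v, p'⟩`
cuts the quadric in the conic `[s : t] ↦ s² p + st v - t² Q(v) p'`, which passes through `p`.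
-/

theorem Finsupp.exists_eq_single_add_single_of_degree_eq_two {σ : Type*} {d : σ →₀ ℕ}
    (hd : d.degree = 2) : ∃ i j, d = Finsupp.single i 1 + Finsupp.single j 1 := by
  classical
  obtain ⟨i, j, hij⟩ := Multiset.card_eq_two.mp ((Finsupp.card_toMultiset d).trans hd)
  refine ⟨i, j, ?_⟩
  rw [← Multiset.toFinsupp_singleton, ← Multiset.toFinsupp_singleton, ← Multiset.toFinsupp_add,
    eq_comm, Multiset.toFinsupp_eq_iff, Multiset.singleton_add, hij, Multiset.insert_eq_cons]

namespace MvPolynomial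

variable {σ R : Type*} [Fintype σ] [CommRing R]

theorem eval_smul_add_smul_C_mul_X_mul_X (c : R) (i j : σ) (a b : R) (x y : σ → R) :
    eval (a • x + b • y) (C c * (X i * X j)) = a ^ 2 * eval x (C c * (X i * X j))
      + a * b * ∑ l, eval x (pderiv l (C c * (X i * X j))) * y l
      + b ^ 2 * eval y (C c * (X i * X j)) := by
  classical
  simp only [Derivation.leibniz, pderiv_C, pderiv_X]
  simp only [add_zero, smul_eq_mul, Pi.single_apply, map_add, map_mul, eval_C, eval_X,
    apply_ite (eval x), map_zero, Pi.add_apply, Pi.smul_apply, mul_add, add_mul, mul_ite, mul_one,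
    mul_zero, ite_mul, zero_mul, Finset.sum_add_distrib, Finset.sum_ite_eq, Finset.mem_univ, if_true]
  ring

theorem IsHomogeneous.eval_smul_add_smul_s13 {q : MvPolynomial σ R} (hq : q.IsHomogeneous 2)
    (a b : R) (x y : σ → R) :
    eval (a • x + b • y) q = a ^ 2 * eval x q
      + a * b * ∑ l, eval x (pderiv l q) * y l + b ^ 2 * eval y q := by
  rw [q.as_sum]
  refine Finset.sum_induction _ (fun r ↦ eval (a • x + b • y) r = a ^ 2 * eval x r
      + a * b * ∑ l, eval x (pderiv l r) * y l + b ^ 2 * eval y r) ?_ (by simp) ?_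
  · intro r r' hr hr'
    simp only [map_add, add_mul, Finset.sum_add_distrib, hr, hr']
    ring
  · intro d hd
    obtain ⟨i, j, rfl⟩ := Finsupp.exists_eq_single_add_single_of_degree_eq_two <| by
      rw [Finsupp.degree_eq_weight_one]; exact hq (mem_support_iff.mp hd)
    generalize coeff _ q = c
    have hmonomial : monomial (Finsupp.single i 1 + Finsupp.single j 1) c = C c * (X i * X j) := by
      rw [X, X, monomial_mul, C_mul_monomial, one_mul, mul_one]
    rw [hmonomial]
    exact eval_smul_add_smul_C_mul_X_mul_X c i j a b x y

theorem IsHomogeneous.polar_eval {q : MvPolynomial σ R} (hq : q.IsHomogeneous 2) (x y : σ → R) :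
    QuadraticMap.polar (fun z ↦ eval z q) x y = ∑ l, eval x (pderiv l q) * y l := by
  have h := hq.eval_smul_add_smul_s13 1 1 x y
  simp only [one_smul, one_pow, one_mul] at h
  rw [QuadraticMap.polar, h]
  ring

noncomputable def IsHomogeneous.toQuadraticForm {q : MvPolynomial σ R} (hq : q.IsHomogeneous 2) :
    QuadraticForm R (σ → R) :=
  .ofPolar (fun x ↦ eval x q)
    (fun a x ↦ by simpa [sq] using hq.eval_smul_add_smul_s13 a 0 x 0)
    (fun x x' y ↦ by
      simp only [QuadraticMap.polar_comm _ _ y, hq.polar_eval, Pi.add_apply, mul_add,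
        Finset.sum_add_distrib])
    (fun a x y ↦ by
      simp only [QuadraticMap.polar_comm _ _ y, hq.polar_eval, Pi.smul_apply, smul_eq_mul,
        Finset.mul_sum]
      exact Finset.sum_congr rfl fun _ _ ↦ by ring)

theorem IsHomogeneous.polar_toQuadraticForm {q : MvPolynomial σ R} (hq : q.IsHomogeneous 2)
    (x y : σ → R) : QuadraticMap.polar hq.toQuadraticForm x y = ∑ l, eval x (pderiv l q) * y l :=
  hq.polar_eval x y

theorem IsHomogeneous.separatingLeft_polarBilin_toQuadraticForm {q : MvPolynomial σ R}
    (hq : q.IsHomogeneous 2) (hsmooth : ∀ v : σ → R, v ≠ 0 → ∃ i, eval v (pderiv i q) ≠ 0) :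
    (QuadraticMap.polarBilin hq.toQuadraticForm).SeparatingLeft := by
  classical
  intro x hx
  by_contra hx0
  obtain ⟨i, hi⟩ := hsmooth x hx0
  exact hi (by simpa [hq.polar_toQuadraticForm, Pi.single_apply] using hx (Pi.single i 1))

end MvPolynomial

namespace QuadraticMap

section CommRing

variable {R M : Type*} [CommRing R] [AddCommGroup M] [Module R M] {Q : QuadraticMap R M R}

theorem polar_self_eq_zero {x : M} (hx : Q x = 0) : polar Q x x = 0 := by
  rw [polar_self, hx, smul_zero]

theorem map_conic_eq_zero {p v w : M} (hp : Q p = 0) (hw : Q w = 0) (hpv : polar Q p v = 0)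
    (hvw : polar Q v w = 0) (hpw : polar Q p w = -Q v) (s t : R) :
    Q (s ^ 2 • p + (s * t) • v + t ^ 2 • w) = 0 := by
  rw [QuadraticMap.map_add ⇑Q, QuadraticMap.map_add ⇑Q, polar_add_left]
  simp only [QuadraticMap.map_smul, polar_smul_left, polar_smul_right, hp, hw, hpv, hvw, hpw,
    smul_eq_mul]
  ring

end CommRing

section Field

variable {k V : Type*} [Field k] [AddCommGroup V] [Module k V] {Q : QuadraticForm k V}

theorem exists_isotropic_polar_eq_one (hQ : (polarBilin Q).SeparatingLeft) {p : V}
    (hp0 : p ≠ 0) (hp : Q p = 0) : ∃ p', Q p' = 0 ∧ polar Q p p' = 1 := by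
  obtain ⟨u, hu⟩ : ∃ u, polar Q p u = 1 := by
    by_contra! h
    refine hp0 (hQ p fun y ↦ ?_)
    rw [polarBilin_apply_apply]
    by_contra hy
    exact h ((polar Q p y)⁻¹ • y) (by rw [polar_smul_right, smul_eq_mul, inv_mul_cancel₀ hy])
  refine ⟨u - Q u • p, ?_, ?_⟩
  · rw [sub_eq_add_neg, QuadraticMap.map_add ⇑Q, ← neg_smul, QuadraticMap.map_smul,
      polar_smul_right, polar_comm, hu, hp]
    simp
  · rw [polar_sub_right, polar_smul_right, hu, polar_self_eq_zero hp]
    simp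

theorem exists_anisotropic_orthogonal_of_hyperbolic_pair [FiniteDimensional k V]
    (hdim : 3 ≤ Module.finrank k V) (hQ : (polarBilin Q).SeparatingLeft) {p p' : V}
    (hp : Q p = 0) (hp' : Q p' = 0) (hpp' : polar Q p p' = 1) :
    ∃ v, polar Q p v = 0 ∧ polar Q p' v = 0 ∧ Q v ≠ 0 := by
  set K := LinearMap.ker ((polarBilin Q p).prod (polarBilin Q p'))
  have hmemK : ∀ x, x ∈ K ↔ polar Q p x = 0 ∧ polar Q p' x = 0 := by
    simp [K]
  by_contra! hK
  -- Otherwise `Q`, hence its polar form, vanishes on `K`, and as `V = K ⊕ ⟨p, p'⟩` a nonzero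
  -- vector of `K` is in the radical.
  have hQK : ∀ x ∈ K, Q x = 0 := fun x hx ↦ hK x ((hmemK x).1 hx).1 ((hmemK x).1 hx).2
  have hpolarK : ∀ x ∈ K, ∀ z ∈ K, polar Q x z = 0 := fun x hx z hz ↦ by
    rw [polar, hQK _ (K.add_mem hx hz), hQK x hx, hQK z hz, sub_zero, sub_zero]
  have hdecomp : ∀ y, y - polar Q p' y • p - polar Q p y • p' ∈ K := by
    intro y
    rw [hmemK]
    simp [polar_sub_right, polar_smul_right, hpp', polar_comm _ p' p, polar_self_eq_zero hp,
      polar_self_eq_zero hp']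
  have hK0 : K ≠ ⊥ := LinearMap.ker_ne_bot_of_finrank_lt (by simp; omega)
  obtain ⟨x, hxK, hx0⟩ := (Submodule.ne_bot_iff K).mp hK0
  refine hx0 (hQ x fun y ↦ ?_)
  simpa [polar_sub_right, polar_smul_right, polar_comm _ x p, polar_comm _ x p',
    ((hmemK x).1 hxK).1, ((hmemK x).1 hxK).2] using hpolarK x hxK _ (hdecomp y)

theorem exists_conic_through [FiniteDimensional k V] (hdim : 3 ≤ Module.finrank k V)
    (hQ : (polarBilin Q).SeparatingLeft) {p : V} (hp0 : p ≠ 0) (hp : Q p = 0) :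
    ∃ ι : (Fin 3 → k) →ₗ[k] V, Function.Injective ι ∧
      (∀ s t : k, Q (ι ![s ^ 2, s * t, t ^ 2]) = 0) ∧ ι ![1, 0, 0] = p := by
  obtain ⟨p', hp', hpp'⟩ := exists_isotropic_polar_eq_one hQ hp0 hp
  obtain ⟨v, hpv, hp'v, hv⟩ :=
    exists_anisotropic_orthogonal_of_hyperbolic_pair hdim hQ hp hp' hpp'
  have hli : LinearIndependent k ![p, v, -Q v • p'] := by
    rw [Fintype.linearIndependent_iff]
    intro g hg
    simp only [Fin.sum_univ_three, Matrix.cons_val] at hg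
    have h0 : g 0 = 0 := by
      simpa [polar_add_right, polar_smul_right, polar_comm _ p' p, hpp', hp'v,
        polar_self_eq_zero hp'] using congrArg (polar Q p') hg
    have h2 : g 2 = 0 := by
      simpa [polar_add_right, polar_smul_right, hpp', hpv, polar_self_eq_zero hp, hv]
        using congrArg (polar Q p) hg
    have h1 : g 1 = 0 := by
      simpa [h0, h2, show v ≠ 0 by rintro rfl; simp at hv] using hg
    intro i
    fin_cases i <;> assumption
  refine ⟨Fintype.linearCombination k ![p, v, -Q v • p'], hli.fintypeLinearCombination_injective,
    fun s t ↦ ?_, by simp [Fintype.linearCombination_apply, Fin.sum_univ_three]⟩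
  simp only [Fintype.linearCombination_apply, Fin.sum_univ_three]
  refine map_conic_eq_zero hp (by simp [QuadraticMap.map_smul, hp']) hpv ?_ (by simp [hpp']) s t
  simp [polar_comm _ v p', hp'v]

end Field

end QuadraticMap

theorem rational_quadric_contains_conic_general
    (k : Type) [Field k] (n : ℕ) (hn : 3 ≤ n)
    (q : MvPolynomial (Fin (n + 1)) k) (hq : q.IsHomogeneous 2)
    (hsmooth : ∀ v : Fin (n + 1) → k, v ≠ 0 →
      ∃ i, MvPolynomial.eval v (MvPolynomial.pderiv i q) ≠ 0)
    (p : Fin (n + 1) → k) (hp0 : p ≠ 0) (hpQ : MvPolynomial.eval p q = 0) :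
    ∃ ι : (Fin 3 → k) →ₗ[k] (Fin (n + 1) → k),
      Function.Injective ι ∧
      (∀ s t : k, MvPolynomial.eval (ι ![s ^ 2, s * t, t ^ 2]) q = 0) ∧
      (∃ s t c : k, ¬ (s = 0 ∧ t = 0) ∧ c ≠ 0 ∧ ι ![s ^ 2, s * t, t ^ 2] = c • p) := by
  have hdim : 3 ≤ Module.finrank k (Fin (n + 1) → k) := by simp; omega
  obtain ⟨ι, hinj, hconic, hι⟩ := QuadraticMap.exists_conic_through hdim
    (hq.separatingLeft_polarBilin_toQuadraticForm hsmooth) hp0 hpQ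
  exact ⟨ι, hinj, hconic, 1, 0, 1, by simp, one_ne_zero, by simpa using hι⟩

/-- A smooth quadric Q = {q = 0} ⊆ ℙⁿ of dimension ≥ 2 (n ≥ 3) over a field k of
characteristic zero that has a smooth k-point p contains a smooth conic defined over k passing
through p: there is an injective linear embedding ι of a plane such that the conic
[s:t] ↦ ι(s², st, t²) lies on Q and passes through p. -/
theorem rational_quadric_contains_conic
    (k : Type) [Field k] [CharZero k] (n : ℕ) (hn : 3 ≤ n)
    (q : MvPolynomial (Fin (n + 1)) k) (hq : q.IsHomogeneous 2)
    (hsmooth : ∀ v : Fin (n + 1) → k, v ≠ 0 →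
      ∃ i, MvPolynomial.eval v (MvPolynomial.pderiv i q) ≠ 0)
    (p : Fin (n + 1) → k) (hp0 : p ≠ 0) (hpQ : MvPolynomial.eval p q = 0) :
    ∃ ι : (Fin 3 → k) →ₗ[k] (Fin (n + 1) → k),
      Function.Injective ι ∧
      (∀ s t : k, MvPolynomial.eval (ι ![s ^ 2, s * t, t ^ 2]) q = 0) ∧
      (∃ s t c : k, ¬ (s = 0 ∧ t = 0) ∧ c ≠ 0 ∧ ι ![s ^ 2, s * t, t ^ 2] = c • p) :=
  rational_quadric_contains_conic_general k n hn q hq hsmooth p hp0 hpQ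
end

section
/- Let n ≥ 8. There exists a quartic hypersurface H ⊆ ℙⁿ over ℝ such that the real locus H(ℝ) is nonempty and contains no line defined over ℝ; for example H: (x₀²+x₁²+x₂²+x₃²−x₄²)² + x₅⁴ + ⋯ + xₙ⁴ = 0 works, since its real locus is the sphere x₀²+x₁²+x₂²+x₃² = x₄² in the subspace x₅ = ⋯ = xₙ = 0, which contains no real lines. -/
private lemma aux_four_sq {a b c d : ℝ} (h : a ^ 2 + b ^ 2 + c ^ 2 + d ^ 2 = 0) :
    a = 0 ∧ b = 0 ∧ c = 0 ∧ d = 0 := by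
  have ha : a ^ 2 = 0 := by nlinarith [sq_nonneg b, sq_nonneg c, sq_nonneg d]
  have hb : b ^ 2 = 0 := by nlinarith [sq_nonneg a, sq_nonneg c, sq_nonneg d]
  have hc : c ^ 2 = 0 := by nlinarith [sq_nonneg a, sq_nonneg b, sq_nonneg d]
  have hd : d ^ 2 = 0 := by nlinarith [sq_nonneg a, sq_nonneg b, sq_nonneg c]
  exact ⟨by simpa using pow_eq_zero_iff two_ne_zero |>.mp ha,
    by simpa using pow_eq_zero_iff two_ne_zero |>.mp hb,
    by simpa using pow_eq_zero_iff two_ne_zero |>.mp hc,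
    by simpa using pow_eq_zero_iff two_ne_zero |>.mp hd⟩

/-- For n ≥ 8 there exists a quartic hypersurface H = {f = 0} ⊆ ℙⁿ over ℝ whose
real locus is nonempty but contains no line defined over ℝ (no 2-dimensional linear subspace
W ⊆ ℝ^{n+1} lies entirely in the affine cone of H); for instance
f = (x₀²+x₁²+x₂²+x₃²−x₄²)² + x₅⁴ + ⋯ + xₙ⁴ works. -/
theorem exists_real_quartic_with_points_but_no_lines
    (n : ℕ) (hn : 8 ≤ n) :
    ∃ f : MvPolynomial (Fin (n + 1)) ℝ, f.IsHomogeneous 4 ∧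
      (∃ x : Fin (n + 1) → ℝ, x ≠ 0 ∧ MvPolynomial.eval x f = 0) ∧
      ∀ W : Submodule ℝ (Fin (n + 1) → ℝ), Module.finrank ℝ W = 2 →
        ¬ (∀ v ∈ W, MvPolynomial.eval v f = 0) := by
  set i0 : Fin (n + 1) := ⟨0, by omega⟩
  set i1 : Fin (n + 1) := ⟨1, by omega⟩
  set i2 : Fin (n + 1) := ⟨2, by omega⟩
  set i3 : Fin (n + 1) := ⟨3, by omega⟩
  set i4 : Fin (n + 1) := ⟨4, by omega⟩
  set s : Finset (Fin (n + 1)) := Finset.univ.filter (fun i => 5 ≤ i.1) with hs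
  set q : MvPolynomial (Fin (n + 1)) ℝ :=
    MvPolynomial.X i0 ^ 2 + MvPolynomial.X i1 ^ 2 + MvPolynomial.X i2 ^ 2 +
      MvPolynomial.X i3 ^ 2 - MvPolynomial.X i4 ^ 2 with hq
  refine ⟨q ^ 2 + ∑ i ∈ s, MvPolynomial.X i ^ 4, ?_, ?_, ?_⟩
  · have hqh : q.IsHomogeneous 2 := by
      have hX : ∀ i : Fin (n + 1), (MvPolynomial.X (R := ℝ) i ^ 2).IsHomogeneous 2 := fun i => by
        simpa using (MvPolynomial.isHomogeneous_X ℝ i).pow 2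
      exact ((((hX i0).add (hX i1)).add (hX i2)).add (hX i3)).sub (hX i4)
    have h1 : (q ^ 2).IsHomogeneous 4 := by simpa using hqh.pow 2
    refine h1.add (MvPolynomial.IsHomogeneous.sum _ _ _ fun i _ => ?_)
    simpa using (MvPolynomial.isHomogeneous_X ℝ i).pow 4
  · refine ⟨fun i => if i = i0 then 1 else if i = i4 then 1 else 0, ?_, ?_⟩
    · intro h
      have := congrFun h i0
      simp at this
    · have hne : ∀ i ∈ s, (i = i0 → False) ∧ (i = i4 → False) := by
        intro i hi
        simp only [hs, Finset.mem_filter] at hi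
        constructor <;> rintro rfl <;> simp [i0, i4] at hi <;> omega
      have hsum : ∑ i ∈ s, (if i = i0 then (1:ℝ) else if i = i4 then 1 else 0) ^ 4 = 0 :=
        Finset.sum_eq_zero fun i hi => by
          rw [if_neg (hne i hi).1, if_neg (hne i hi).2]; norm_num
      have h04 : i0 ≠ i4 := by simp [i0, i4, Fin.ext_iff]
      have h14 : i1 ≠ i4 := by simp [i1, i4, Fin.ext_iff]
      have h24 : i2 ≠ i4 := by simp [i2, i4, Fin.ext_iff]
      have h34 : i3 ≠ i4 := by simp [i3, i4, Fin.ext_iff]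
      have h10 : i1 ≠ i0 := by simp [i1, i0, Fin.ext_iff]
      have h20 : i2 ≠ i0 := by simp [i2, i0, Fin.ext_iff]
      have h30 : i3 ≠ i0 := by simp [i3, i0, Fin.ext_iff]
      simp only [hq, map_add, map_sub, map_pow, map_sum, MvPolynomial.eval_X]
      simp [h04, h14, h24, h34, h10, h20, h30, hsum]
      exact Finset.sum_eq_zero fun i hi => by
        rw [if_neg (hne i hi).1, if_neg (hne i hi).2]
  · intro W hW hall
    -- every v in W has v i4 determining it; i.e. the map v ↦ v i4 is injective on W
    have key : ∀ v ∈ W, ((v i0)^2 + (v i1)^2 + (v i2)^2 + (v i3)^2 - (v i4)^2 = 0)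
        ∧ ∀ i ∈ s, v i = 0 := by
      intro v hv
      have h := hall v hv
      simp only [map_add, map_pow, map_sub, MvPolynomial.eval_X, map_sum, hq] at h
      have hnn1 : (0:ℝ) ≤ ((v i0)^2 + (v i1)^2 + (v i2)^2 + (v i3)^2 - (v i4)^2) ^ 2 :=
        sq_nonneg _
      have hnn2 : (0:ℝ) ≤ ∑ i ∈ s, v i ^ 4 :=
        Finset.sum_nonneg fun i _ => by positivity
      have h1 : ((v i0)^2 + (v i1)^2 + (v i2)^2 + (v i3)^2 - (v i4)^2) ^ 2 = 0 ∧
          (∑ i ∈ s, v i ^ 4) = 0 := by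
        constructor <;> nlinarith
      refine ⟨by nlinarith [h1.1], ?_⟩
      intro i hi
      have := (Finset.sum_eq_zero_iff_of_nonneg (fun i _ => by positivity)).mp h1.2 i hi
      exact pow_eq_zero_iff (by norm_num) |>.mp this
    clear hall
    clear_value q
    clear hq q
    have hinj : Function.Injective
        ((LinearMap.proj i4 : (Fin (n+1) → ℝ) →ₗ[ℝ] ℝ).comp W.subtype) := by
      rw [← LinearMap.ker_eq_bot, LinearMap.ker_eq_bot']
      intro m hm
      obtain ⟨v, hv⟩ := m
      simp only [LinearMap.comp_apply, Submodule.subtype_apply, LinearMap.proj_apply] at hm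
      obtain ⟨hquad, hrest⟩ := key v hv
      have hz : v = 0 := by
        funext j
        rw [Pi.zero_apply]
        rcases Nat.lt_or_ge j.1 5 with hj | hj
        · have h0 : (v i0)^2 + (v i1)^2 + (v i2)^2 + (v i3)^2 = 0 := by
            rw [hm] at hquad; nlinarith
          have hj' : j = i0 ∨ j = i1 ∨ j = i2 ∨ j = i3 ∨ j = i4 := by
            simp only [i0, i1, i2, i3, i4, Fin.ext_iff]
            omega
          obtain ⟨e0, e1, e2, e3⟩ := aux_four_sq h0
          rcases hj' with rfl | rfl | rfl | rfl | rfl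
          · exact e0
          · exact e1
          · exact e2
          · exact e3
          · exact hm
        · exact hrest j (by simp [hs, hj])
      simp [Subtype.ext_iff, hz]
    have hle : Module.finrank ℝ W ≤ Module.finrank ℝ ℝ :=
      LinearMap.finrank_le_finrank_of_injective hinj
    rw [hW, Module.finrank_self] at hle
    omega
end
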